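/- Combining continuity, compactness and the intermediate value theorem: let Λ : ℝ^d × [0, t] → ℝ be continuous, Λ(y, 0) = 1 for all y, let M ⊆ ℝ^d be compact with min over x ∈ M of Λ(x, t) = m > 1. Then for every r ∈ (1, m) there exists ρ > 0 such that for all y with dist(y, M) < ρ there exists τ ∈ (0, t] with Λ(y, τ) = r; consequently the ISLE field γ_r is strictly positive on the ρ-neighborhood of M. -/
import Mathlib


/-- Near a ridge of the final-time eigenvalue field, the ISLE field with any
sub-minimal separation factor is positive: if `Λ` is jointly continuous,
`Λ(y,0) = 1`, `M` is compact with `min_{x ∈ M} Λ(x,t) = m > 1`, then for every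
`r ∈ (1, m)` there is `ρ > 0` such that every `y` with `dist(y, M) < ρ` reaches the
threshold `r` at some time `τ ∈ (0, t]`, and the ISLE `γ_r = (ln r)/τ_r` is strictly
positive there. -/
theorem isle_positive_on_tubular_neighbourhood {d : ℕ}
    (t : ℝ) (ht : 0 < t)
    (Λ : (Fin d → ℝ) → ℝ → ℝ)
    (hΛ : Continuous fun p : (Fin d → ℝ) × ℝ => Λ p.1 p.2)
    (hΛ0 : ∀ y, Λ y 0 = 1)
    (M : Set (Fin d → ℝ)) (hM : IsCompact M)
    (m : ℝ) (hm : IsLeast ((fun x => Λ x t) '' M) m) (hm1 : 1 < m)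
    (r : ℝ) (hr1 : 1 < r) (hrm : r < m) :
    ∃ ρ > 0, ∀ y : Fin d → ℝ, Metric.infDist y M < ρ →
      (∃ τ ∈ Set.Ioc 0 t, Λ y τ = r) ∧
        0 < Real.log r / sInf {τ | τ ∈ Set.Ioc 0 t ∧ Λ y τ = r} := by
  -- the set where the final-time value exceeds `r` is open and contains `M`
  have hMne : M.Nonempty := by
    obtain ⟨x, hx, -⟩ := hm.1
    exact ⟨x, hx⟩
  have hcont : ∀ y, Continuous (Λ y) := fun y =>
    hΛ.comp (continuous_const.prodMk continuous_id)
  have hU : IsOpen {y : Fin d → ℝ | r < Λ y t} := by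
    have : Continuous fun y : Fin d → ℝ => Λ y t :=
      hΛ.comp (continuous_id.prodMk continuous_const)
    exact isOpen_Ioi.preimage this
  have hMU : M ⊆ {y : Fin d → ℝ | r < Λ y t} := fun x hx =>
    lt_of_lt_of_le hrm (hm.2 ⟨x, hx, rfl⟩)
  obtain ⟨ρ, hρ, hthick⟩ := hM.exists_thickening_subset_open hU hMU
  refine ⟨ρ, hρ, fun y hy => ?_⟩
  have hyU : r < Λ y t := by
    have : y ∈ Metric.thickening ρ M :=
      (Metric.mem_thickening_iff_infDist_lt hMne).2 hy
    exact hthick this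
  -- intermediate value theorem gives a hitting time in `(0, t]`
  have hIVT : ∃ τ ∈ Set.Ioc 0 t, Λ y τ = r := by
    have h := intermediate_value_Ioc ht.le (hcont y).continuousOn
    have hrmem : r ∈ Set.Ioc (Λ y 0) (Λ y t) := by
      rw [hΛ0 y]; exact ⟨hr1, hyU.le⟩
    obtain ⟨τ, hτ, hτr⟩ := h hrmem
    exact ⟨τ, hτ, hτr⟩
  refine ⟨hIVT, ?_⟩
  set S : Set ℝ := {τ | τ ∈ Set.Ioc 0 t ∧ Λ y τ = r} with hS
  have hSne : S.Nonempty := by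
    obtain ⟨τ, hτ, hτr⟩ := hIVT
    exact ⟨τ, hτ, hτr⟩
  have hSbdd : BddBelow S := ⟨0, fun τ hτ => hτ.1.1.le⟩
  have hSpos : 0 < sInf S := by
    rcases lt_or_eq_of_le (le_csInf hSne fun τ hτ => hτ.1.1.le) with h | h
    · exact h
    · exfalso
      -- `sInf S = 0` would force `Λ y 0 = r` by continuity, contradicting `Λ y 0 = 1`
      have hclosed : IsClosed {τ : ℝ | Λ y τ = r} :=
        isClosed_eq (hcont y) continuous_const
      have hmem : sInf S ∈ closure S := csInf_mem_closure hSne hSbdd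
      have hsub : closure S ⊆ {τ : ℝ | Λ y τ = r} :=
        closure_minimal (fun τ hτ => hτ.2) hclosed
      have : Λ y (sInf S) = r := hsub hmem
      rw [← h, hΛ0 y] at this
      exact absurd this (ne_of_lt hr1)
  exact div_pos (Real.log_pos hr1) hSpos
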